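/- The dimension formula d_{p,q} = (n+p-2)!(n+q-2)!(n+p+q-1)! / ((n-1)!(n-2)! p! q!) defines a positive integer for all integers n ≥ 2 and p, q ≥ 0. -/
import Mathlib


theorem stmt5 (n p q : ℕ) (hn : 2 ≤ n) :
    ∃ d : ℕ, 0 < d ∧
      ((Nat.factorial (n+p-2) * Nat.factorial (n+q-2) * Nat.factorial (n+p+q-1) : ℚ)
        / (Nat.factorial (n-1) * Nat.factorial (n-2) * Nat.factorial p * Nat.factorial q)
        = (d : ℚ)) := by
  obtain ⟨a, rfl⟩ : ∃ a, n = a + 2 := ⟨n - 2, by omega⟩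
  have e1 : a + 2 + p - 2 = a + p := by omega
  have e2 : a + 2 + q - 2 = a + q := by omega
  have e3 : a + 2 + p + q - 1 = a + p + q + 1 := by omega
  have e4 : a + 2 - 1 = a + 1 := by omega
  have e5 : a + 2 - 2 = a := by omega
  rw [e1, e2, e3, e4, e5]
  refine ⟨(a+p).choose p * (a+q).choose q * (a+p+q+1).choose (p+q) * (p+q).factorial
      * a.factorial, ?_, ?_⟩
  · have := Nat.choose_pos (Nat.le_add_left p a)
    have := Nat.choose_pos (Nat.le_add_left q a)
    have h : p + q ≤ a + p + q + 1 := by omega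
    have := Nat.choose_pos h
    positivity
  · have h1 : (a+p).choose p * p.factorial * a.factorial = (a+p).factorial := by
      have := Nat.choose_mul_factorial_mul_factorial (Nat.le_add_left p a)
      simpa using this
    have h2 : (a+q).choose q * q.factorial * a.factorial = (a+q).factorial := by
      have := Nat.choose_mul_factorial_mul_factorial (Nat.le_add_left q a)
      simpa using this
    have h3 : (a+p+q+1).choose (p+q) * (p+q).factorial * (a+1).factorial
        = (a+p+q+1).factorial := by
      have hle : p + q ≤ a + p + q + 1 := by omega
      have := Nat.choose_mul_factorial_mul_factorial hle
      have hsub : a + p + q + 1 - (p + q) = a + 1 := by omega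
      rw [hsub] at this
      exact this
    have key : (a+p).factorial * (a+q).factorial * (a+p+q+1).factorial
        = ((a+p).choose p * (a+q).choose q * (a+p+q+1).choose (p+q) * (p+q).factorial
            * a.factorial) * ((a+1).factorial * a.factorial * p.factorial * q.factorial) := by
      rw [← h1, ← h2, ← h3]; ring
    rw [div_eq_iff (by positivity)]
    exact_mod_cast key
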